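/- Let X_1,...,X_t be i.i.d. Bernoulli random variables with mean p, and let p̂_t = (1/t)∑_{s=1}^t X_s and V_t = (1/t)∑_{s=1}^t (X_s − p̂_t)². Then with probability at least 1 − δ, p ≥ p̂_t − √(3 V_t ln(3/δ)/t) − 5 ln(3/δ)/t, i.e., the empirical-Bernstein lower confidence bound max{0, p̂_t − √(3V_t ln(3/δ)/t) − 5 ln(3/δ)/t} does not exceed p. -/

import Mathlib

/-!
Let `q = p̂_t` and `B = ln(3/δ)/t`. For 0/1 samples `V_t = q(1 - q)`, and since
`p(1 - p) ≤ q(1 - q) + (q - p)`, an elementary estimate shows that whenever the bound fails,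
`q - p ≥ √(2 p(1 - p) B) + 2B/3`. By Bernstein's inequality for Bernoulli sums (Chernoff's bound
combined with Bennett's estimate `log 𝔼 e^{λ(X - p)} ≤ p(1 - p)(e^λ - 1 - λ)`, the bound
`(2 - 2λ/3)(e^λ - 1 - λ) ≤ λ²` and the choice `λ = ε / (p(1 - p) + ε/3)`) this deviation has
probability at most `e^{-tB} = δ/3`.
-/

open MeasureTheory ProbabilityTheory Real

lemma monotoneOn_Ici_of_hasDerivAt_nonneg {f f' : ℝ → ℝ}
    (hf : ∀ x, 0 ≤ x → HasDerivAt f (f' x) x) (hf' : ∀ x, 0 ≤ x → 0 ≤ f' x) :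
    MonotoneOn f (Set.Ici 0) := by
  refine monotoneOn_of_hasDerivWithinAt_nonneg (f' := f') (convex_Ici 0)
    (fun x hx => (hf x hx).continuousAt.continuousWithinAt) (fun x hx => ?_) (fun x hx => ?_)
  · rw [interior_Ici] at hx
    exact (hf x (le_of_lt hx)).hasDerivWithinAt
  · rw [interior_Ici] at hx
    exact hf' x (le_of_lt hx)

lemma hasDerivAt_exp_sub_one_sub (x : ℝ) :
    HasDerivAt (fun x => exp x - 1 - x) (exp x - 1) x :=
  ((hasDerivAt_exp x).sub_const 1).sub (hasDerivAt_id' x)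

lemma two_sub_mul_exp_sub_one_sub_le_sq {x : ℝ} (hx : 0 ≤ x) :
    (2 - 2 * x / 3) * (exp x - 1 - x) ≤ x ^ 2 := by
  have hlin : ∀ x, HasDerivAt (fun x : ℝ => 2 - 2 * x / 3) (-(2 / 3)) x := fun x => by
    simpa using ((hasDerivAt_id' x).const_mul 2).div_const 3 |>.const_sub 2
  -- the second derivative of `x ^ 2 - (2 - 2x/3)(eˣ - 1 - x)` is `(2/3)(1 - (1 - x) eˣ) ≥ 0`
  have hd1 : MonotoneOn (fun x => 2 * x + 2 / 3 * (exp x - 1 - x) - (2 - 2 * x / 3) * (exp x - 1))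
      (Set.Ici 0) := by
    refine monotoneOn_Ici_of_hasDerivAt_nonneg
      (f' := fun x =>
        2 * 1 + 2 / 3 * (exp x - 1) - (-(2 / 3) * (exp x - 1) + (2 - 2 * x / 3) * exp x))
      (fun x _ => ?_) (fun x _ => ?_)
    · exact (((hasDerivAt_id' x).const_mul 2).add ((hasDerivAt_exp_sub_one_sub x).const_mul _)).sub
        ((hlin x).mul ((hasDerivAt_exp x).sub_const 1))
    · have : (1 - x) * exp x ≤ 1 := by
        have := add_one_le_exp (-x)
        calc (1 - x) * exp x ≤ exp (-x) * exp x := by gcongr; linarith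
          _ = 1 := by rw [← exp_add]; simp
      nlinarith
  have hd0 : MonotoneOn (fun x => x ^ 2 - (2 - 2 * x / 3) * (exp x - 1 - x)) (Set.Ici 0) := by
    refine monotoneOn_Ici_of_hasDerivAt_nonneg
      (f' := fun x => 2 * x + 2 / 3 * (exp x - 1 - x) - (2 - 2 * x / 3) * (exp x - 1))
      (fun x _ => ?_) (fun x hx => ?_)
    · exact ((hasDerivAt_pow 2 x).sub ((hlin x).mul (hasDerivAt_exp_sub_one_sub x))).congr_deriv
        (by ring)
    · simpa using hd1 Set.self_mem_Ici hx hx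
  simpa using hd0 Set.self_mem_Ici hx hx

lemma one_add_mul_exp_sub_one_le_exp {p x : ℝ} (hp0 : 0 ≤ p) (hp1 : p ≤ 1) (hx : 0 ≤ x) :
    1 + p * (exp x - 1) ≤ exp (p * x + p * (1 - p) * (exp x - 1 - x)) := by
  have hD : ∀ x : ℝ, 0 ≤ x → 0 < 1 + p * (exp x - 1) := fun x hx => by
    have := one_le_exp hx; nlinarith
  have hmono : MonotoneOn
      (fun x => p * x + p * (1 - p) * (exp x - 1 - x) - log (1 + p * (exp x - 1))) (Set.Ici 0) := by
    refine monotoneOn_Ici_of_hasDerivAt_nonneg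
      (f' := fun x => p * 1 + p * (1 - p) * (exp x - 1) - p * exp x / (1 + p * (exp x - 1)))
      (fun x hx => ?_) (fun x hx => ?_)
    · exact (((hasDerivAt_id' x).const_mul p).add ((hasDerivAt_exp_sub_one_sub x).const_mul _)).sub
        ((((hasDerivAt_exp x).sub_const 1).const_mul p).const_add 1 |>.log (hD x hx).ne')
    · have : p * 1 + p * (1 - p) * (exp x - 1) - p * exp x / (1 + p * (exp x - 1))
          = p ^ 2 * (1 - p) * (exp x - 1) ^ 2 / (1 + p * (exp x - 1)) := by
        field_simp [(hD x hx).ne']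
        ring
      simp only [this]
      have : 0 ≤ 1 - p := by linarith
      exact div_nonneg (by positivity) (hD x hx).le
  have := hmono Set.self_mem_Ici hx hx
  simp only [mul_zero, exp_zero, sub_self, add_zero, log_one] at this
  calc 1 + p * (exp x - 1) = exp (log (1 + p * (exp x - 1))) := (exp_log (hD x hx)).symm
    _ ≤ _ := exp_le_exp.mpr (by linarith)

lemma bernstein_exponent_le {a ε : ℝ} (ha : 0 ≤ a) (hε : 0 < ε) :
    a * (exp (ε / (a + ε / 3)) - 1 - ε / (a + ε / 3)) - ε / (a + ε / 3) * ε
      ≤ -(ε ^ 2 / (2 * (a + ε / 3))) := by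
  set c := a + ε / 3 with hc_def
  have hc : 0 < c := by positivity
  have key := two_sub_mul_exp_sub_one_sub_le_sq (x := ε / c) (by positivity)
  rw [show 2 - 2 * (ε / c) / 3 = 2 * a / c by field_simp; rw [hc_def]; ring] at key
  have : a * (exp (ε / c) - 1 - ε / c) ≤ ε ^ 2 / (2 * c) := by
    rw [le_div_iff₀ (by positivity)]
    rw [div_pow, div_mul_eq_mul_div, div_le_div_iff₀ hc (by positivity)] at key
    nlinarith
  have : ε / c * ε = 2 * (ε ^ 2 / (2 * c)) := by field_simp
  linarith

section Bernoulli

variable {Ω : Type*} [MeasurableSpace Ω] {μ : Measure Ω} {Y : Ω → ℝ}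

lemma integrable_of_ae_zero_or_one [IsFiniteMeasure μ] (hY : Measurable Y)
    (hBer : ∀ᵐ ω ∂μ, Y ω = 0 ∨ Y ω = 1) :
    Integrable Y μ :=
  Integrable.of_bound hY.aestronglyMeasurable 1 <| hBer.mono fun ω h => by
    rcases h with h | h <;> simp [h]

lemma exp_mul_ae_eq_of_ae_zero_or_one (hBer : ∀ᵐ ω ∂μ, Y ω = 0 ∨ Y ω = 1) (l : ℝ) :
    (fun ω => exp (l * Y ω)) =ᵐ[μ] fun ω => 1 + (exp l - 1) * Y ω :=
  hBer.mono fun ω h => by rcases h with h | h <;> simp [h]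

lemma mgf_eq_of_ae_zero_or_one [IsProbabilityMeasure μ] {p : ℝ} (hY : Measurable Y)
    (hBer : ∀ᵐ ω ∂μ, Y ω = 0 ∨ Y ω = 1) (hmean : ∫ ω, Y ω ∂μ = p) (l : ℝ) :
    mgf Y μ l = 1 + p * (exp l - 1) := by
  have hint := integrable_of_ae_zero_or_one hY hBer
  rw [mgf, integral_congr_ae (exp_mul_ae_eq_of_ae_zero_or_one hBer l),
    integral_add (integrable_const 1) (hint.const_mul _), integral_const_mul, hmean]
  simp only [integral_const, probReal_univ, smul_eq_mul, mul_one]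
  ring

lemma integrable_exp_mul_of_ae_zero_or_one [IsFiniteMeasure μ] (hY : Measurable Y)
    (hBer : ∀ᵐ ω ∂μ, Y ω = 0 ∨ Y ω = 1) (l : ℝ) :
    Integrable (fun ω => exp (l * Y ω)) μ :=
  ((integrable_const 1).add ((integrable_of_ae_zero_or_one hY hBer).const_mul _)).congr
    (exp_mul_ae_eq_of_ae_zero_or_one hBer l).symm

end Bernoulli

section BernoulliSum

variable {Ω : Type*} [MeasurableSpace Ω] {μ : Measure Ω} [IsProbabilityMeasure μ]
  {ι : Type*} [Fintype ι] {X : ι → Ω → ℝ} {p : ℝ}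

theorem measureReal_sum_ge_le_of_ae_zero_or_one (hp0 : 0 ≤ p) (hp1 : p ≤ 1)
    (hmeas : ∀ i, Measurable (X i)) (hindep : iIndepFun X μ)
    (hBer : ∀ i, ∀ᵐ ω ∂μ, X i ω = 0 ∨ X i ω = 1) (hmean : ∀ i, ∫ ω, X i ω ∂μ = p)
    {ε : ℝ} (hε : 0 < ε) :
    μ.real {ω | Fintype.card ι * (p + ε) ≤ ∑ i, X i ω}
      ≤ exp (-(Fintype.card ι * (ε ^ 2 / (2 * (p * (1 - p) + ε / 3))))) := by
  set n : ℝ := (Fintype.card ι : ℝ) with hn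
  set a := p * (1 - p)
  set l := ε / (a + ε / 3)
  have ha : 0 ≤ a := mul_nonneg hp0 (by linarith)
  have hl : 0 ≤ l := by positivity
  have hmgf : ∀ i, mgf (X i) μ l ≤ exp (p * l + a * (exp l - 1 - l)) := fun i => by
    rw [mgf_eq_of_ae_zero_or_one (hmeas i) (hBer i) (hmean i)]
    exact one_add_mul_exp_sub_one_le_exp hp0 hp1 hl
  calc μ.real {ω | n * (p + ε) ≤ ∑ i, X i ω}
      ≤ exp (-l * (n * (p + ε))) * mgf (∑ i, X i) μ l := by
        simpa only [Finset.sum_apply] using measure_ge_le_exp_mul_mgf _ hl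
          (hindep.integrable_exp_mul_sum hmeas fun i _ =>
            integrable_exp_mul_of_ae_zero_or_one (hmeas i) (hBer i) l)
    _ = exp (-l * (n * (p + ε))) * ∏ i, mgf (X i) μ l := by rw [hindep.mgf_sum hmeas]
    _ ≤ exp (-l * (n * (p + ε))) * ∏ _i : ι, exp (p * l + a * (exp l - 1 - l)) := by
        gcongr with i
        exacts [fun i _ => mgf_nonneg, hmgf i]
    _ = exp (n * (a * (exp l - 1 - l) - l * ε)) := by
        rw [Finset.prod_const, ← exp_nat_mul, ← exp_add, Finset.card_univ, ← hn]
        ring_nf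
    _ ≤ exp (-(n * (ε ^ 2 / (2 * (a + ε / 3))))) := by
        rw [← mul_neg]
        exact exp_le_exp.mpr <|
          mul_le_mul_of_nonneg_left (bernstein_exponent_le ha hε) (Nat.cast_nonneg _)

theorem measureReal_sum_ge_bernstein_le_of_ae_zero_or_one (hp0 : 0 ≤ p) (hp1 : p ≤ 1)
    (hmeas : ∀ i, Measurable (X i)) (hindep : iIndepFun X μ)
    (hBer : ∀ i, ∀ᵐ ω ∂μ, X i ω = 0 ∨ X i ω = 1) (hmean : ∀ i, ∫ ω, X i ω ∂μ = p)
    {B : ℝ} (hB : 0 < B) :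
    μ.real {ω | Fintype.card ι * (p + (√(2 * (p * (1 - p)) * B) + 2 * B / 3)) ≤ ∑ i, X i ω}
      ≤ exp (-(Fintype.card ι * B)) := by
  have ha : 0 ≤ p * (1 - p) := mul_nonneg hp0 (by linarith)
  refine (measureReal_sum_ge_le_of_ae_zero_or_one hp0 hp1 hmeas hindep hBer hmean
    (by positivity)).trans (exp_le_exp.mpr (neg_le_neg ?_))
  gcongr
  have hs := sq_sqrt (show 0 ≤ 2 * (p * (1 - p)) * B by positivity)
  rw [le_div_iff₀ (by positivity)]
  nlinarith [mul_nonneg hB.le (sqrt_nonneg (2 * (p * (1 - p)) * B))]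

end BernoulliSum

lemma one_sub_le_measureReal_of_measureReal_compl_le {Ω : Type*} [MeasurableSpace Ω]
    {μ : Measure Ω} [IsProbabilityMeasure μ] {s : Set Ω} {δ : ℝ} (h : μ.real sᶜ ≤ δ) :
    1 - δ ≤ μ.real s := by
  have := measureReal_union_le (μ := μ) s sᶜ
  rw [Set.union_compl_self, probReal_univ] at this
  linarith

lemma add_sqrt_le_of_lt_sub_sqrt_sub {p q B : ℝ} (hp0 : 0 ≤ p) (hp1 : p ≤ 1) (hq0 : 0 ≤ q)
    (hq1 : q ≤ 1) (hB : 0 ≤ B) (h : p < q - √(3 * (q * (1 - q)) * B) - 5 * B) :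
    p + (√(2 * (p * (1 - p)) * B) + 2 * B / 3) ≤ q := by
  set S := √(3 * (q * (1 - q)) * B)
  set R := √(2 * (q - p) * B)
  have hS : 0 ≤ S := sqrt_nonneg _
  have hR : 0 ≤ R := sqrt_nonneg _
  have hd : 0 ≤ q - p := by linarith
  have hS2 : S ^ 2 = 3 * (q * (1 - q)) * B := sq_sqrt (by positivity)
  have hR2 : R ^ 2 = 2 * (q - p) * B := sq_sqrt (by positivity)
  -- `p (1 - p) ≤ q (1 - q) + (q - p)` and `2 ≤ 3 (17/20)²`
  have hvar : √(2 * (p * (1 - p)) * B) ≤ 17 / 20 * S + R := by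
    rw [sqrt_le_left (by positivity)]
    nlinarith [mul_nonneg hS hR]
  have hamgm : R ≤ 3 * (q - p) / 20 + 10 * B / 3 := by
    rw [sqrt_le_left (by positivity)]
    nlinarith [sq_nonneg (3 * (q - p) / 20 - 10 * B / 3)]
  linarith

lemma empirical_variance_eq_of_zero_or_one {n : ℕ} {x : Fin n → ℝ}
    (hx : ∀ s, x s = 0 ∨ x s = 1) :
    1 / (n : ℝ) * ∑ s, (x s - (∑ i, x i) / n) ^ 2
      = (∑ i, x i) / n * (1 - (∑ i, x i) / n) := by
  obtain rfl | hn := n.eq_zero_or_pos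
  · simp
  set m := (∑ i, x i) / n with hm
  have hsq : ∀ s, (x s - m) ^ 2 = (1 - 2 * m) * x s + m ^ 2 := fun s => by
    rcases hx s with h | h <;> rw [h] <;> ring
  simp only [hsq, Finset.sum_add_distrib, ← Finset.mul_sum, Finset.sum_const, Finset.card_univ,
    Fintype.card_fin, nsmul_eq_mul]
  rw [hm]
  field_simp
  ring

lemma card_mul_add_sqrt_le_sum_of_lt_empirical_bound {n : ℕ} (hn : 0 < n) {x : Fin n → ℝ}
    (hx : ∀ s, x s = 0 ∨ x s = 1) {p L : ℝ} (hp0 : 0 ≤ p) (hp1 : p ≤ 1) (hL : 0 ≤ L)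
    (h : p < (∑ s, x s) / n - √(3 * (1 / (n : ℝ) * ∑ s, (x s - (∑ i, x i) / n) ^ 2) * L / n)
      - 5 * L / n) :
    n * (p + (√(2 * (p * (1 - p)) * (L / n)) + 2 * (L / n) / 3)) ≤ ∑ s, x s := by
  have hn' : (0 : ℝ) < n := by exact_mod_cast hn
  have hsum0 : 0 ≤ ∑ s, x s := Finset.sum_nonneg fun s _ => by rcases hx s with h | h <;> simp [h]
  have hsum1 : ∑ s, x s ≤ n := by
    simpa using Finset.sum_le_sum fun s (_ : s ∈ Finset.univ) => show x s ≤ 1 by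
      rcases hx s with h | h <;> simp [h]
  rw [empirical_variance_eq_of_zero_or_one hx, mul_div_assoc, mul_div_assoc] at h
  rw [mul_comm, ← le_div_iff₀ hn']
  exact add_sqrt_le_of_lt_sub_sqrt_sub hp0 hp1 (by positivity) ((div_le_one hn').2 hsum1)
    (by positivity) h

/-- Empirical Bernstein bound: for i.i.d. Bernoulli(`p`) variables `X 1, ..., X t` with
empirical mean `p̂_t` and empirical variance `V_t`, with probability at least `1 - δ`,
`p ≥ p̂_t - √(3 V_t ln(3/δ) / t) - 5 ln(3/δ) / t`. -/
theorem stmt8 {Ω : Type*} [MeasurableSpace Ω] (μ : Measure Ω) [IsProbabilityMeasure μ]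
    (t : ℕ) (ht : 1 ≤ t) (p : ℝ) (hp : p ∈ Set.Icc (0 : ℝ) 1)
    (X : Fin t → Ω → ℝ)
    (hmeas : ∀ s, Measurable (X s))
    (hindep : ProbabilityTheory.iIndepFun X μ)
    (hBer : ∀ s, ∀ᵐ ω ∂μ, X s ω = 0 ∨ X s ω = 1)
    (hmean : ∀ s, (∫ ω, X s ω ∂μ) = p)
    (δ : ℝ) (hδ : δ ∈ Set.Ioo (0 : ℝ) 1) :
    1 - δ ≤ (μ {ω |
        (∑ s, X s ω) / t
          - Real.sqrt (3 * ((1 / (t : ℝ)) * ∑ s, (X s ω - (∑ i, X i ω) / t) ^ 2)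
              * Real.log (3 / δ) / t)
          - 5 * Real.log (3 / δ) / t ≤ p}).toReal := by
  obtain ⟨hp0, hp1⟩ := hp
  obtain ⟨hδ0, hδ1⟩ := hδ
  have ht0 : (0 : ℝ) < t := by exact_mod_cast ht
  have hL : 0 < log (3 / δ) := log_pos (by rw [lt_div_iff₀ hδ0]; linarith)
  refine one_sub_le_measureReal_of_measureReal_compl_le ?_
  calc μ.real {ω | _ ≤ p}ᶜ
      ≤ μ.real {ω | t * (p + (√(2 * (p * (1 - p)) * (log (3 / δ) / t))
          + 2 * (log (3 / δ) / t) / 3)) ≤ ∑ s, X s ω} := by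
        refine ENNReal.toReal_mono (measure_ne_top _ _) (measure_mono_ae ?_)
        filter_upwards [ae_all_iff.2 hBer] with ω hω hbad
        exact card_mul_add_sqrt_le_sum_of_lt_empirical_bound ht hω hp0 hp1 hL.le (not_le.mp hbad)
    _ ≤ exp (-(t * (log (3 / δ) / t))) := by
        simpa only [Fintype.card_fin] using measureReal_sum_ge_bernstein_le_of_ae_zero_or_one
          hp0 hp1 hmeas hindep hBer hmean (div_pos hL ht0)
    _ = δ / 3 := by
        rw [mul_div_cancel₀ _ ht0.ne', exp_neg, exp_log (by positivity), inv_div]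
    _ ≤ δ := by linarith
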